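/- For all n ≥ 3, |A_n| = ((n−1)/(n−2)) · |A_{n-1}| · |A_{n-2}|, equivalently (n−2)|A_n| = (n−1)|A_{n-1}||A_{n-2}|, with |A_1| = |A_2| = 1. -/

import Mathlib

/-- Sets of inflated random Fibonacci words: A₁ = {0}, A₂ = {1},
    Aₙ = Aₙ₋₁Aₙ₋₂ ∪ Aₙ₋₂Aₙ₋₁ for n ≥ 3 (A₀ = ∅). -/
def wordSet : ℕ → Set (List Bool)
  | 0 => ∅
  | 1 => {[false]}
  | 2 => {[true]}
  | (n + 3) => Set.image2 (· ++ ·) (wordSet (n + 2)) (wordSet (n + 1)) ∪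
      Set.image2 (· ++ ·) (wordSet (n + 1)) (wordSet (n + 2))

/-- Concatenation of sets of words: UV = {uv : u ∈ U, v ∈ V}. -/
def cat (U V : Set (List Bool)) : Set (List Bool) := Set.image2 (· ++ ·) U V

/-- W[a,b]: the set of segments wₐ…w_b (1-based indexing) of words in W. -/
def seg (W : Set (List Bool)) (a b : ℕ) : Set (List Bool) :=
  (fun w => (w.drop (a - 1)).take (b - a + 1)) '' W

/-- F(S, m): the set of all contiguous factors of length m of words in S. -/
def factorSet (S : Set (List Bool)) (m : ℕ) : Set (List Bool) :=
  {x | x.length = m ∧ ∃ w ∈ S, x <:+: w}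

/-- Fₙ: the set of factors of length fₙ occurring in any inflated word. -/
def Fn (n : ℕ) : Set (List Bool) := ⋃ m ≥ 1, factorSet (wordSet m) (Nat.fib n)

/-!
Write `aₙ = |Aₙ|`. Every word of `Aₙ` has length `fₙ`, so concatenations of these sets are
products as far as counting goes. A word of `Aₙ₊₂Aₙ₊₁ ∩ Aₙ₊₁Aₙ₊₂` has a prefix from `Aₙ₊₁`
inside its prefix from `Aₙ₊₂`, and the remainder lies in `Aₙ` by a cancellation property of
the sets `Aₙ`; hence the intersection is `Aₙ₊₁AₙAₙ₊₁`, and inclusion–exclusion gives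
`aₙ₊₃ = 2 aₙ₊₂ aₙ₊₁ - aₙ₊₁² aₙ`. Induction on `n` turns this into the stated recurrence.
-/

theorem List.exists_eq_append_of_append_eq_append {α : Type*} {p q b a : List α}
    (h : b ++ a = p ++ q) (hl : b.length ≤ p.length) : ∃ c, p = b ++ c ∧ a = c ++ q := by
  obtain ⟨c, rfl⟩ := List.prefix_of_prefix_length_le (h ▸ List.prefix_append b a)
    (List.prefix_append p q) hl
  exact ⟨c, rfl, List.append_cancel_left (h.trans (List.append_assoc b c q))⟩

theorem Set.ncard_image2_append {α : Type*} {U V : Set (List α)} {L : ℕ}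
    (hU : ∀ u ∈ U, u.length = L) : (Set.image2 (· ++ ·) U V).ncard = U.ncard * V.ncard := by
  rw [← Set.image_prod, ← Set.ncard_prod]
  refine Set.InjOn.ncard_image ?_
  rintro ⟨u₁, v₁⟩ ⟨hu₁, -⟩ ⟨u₂, v₂⟩ ⟨hu₂, -⟩ h
  obtain ⟨rfl, rfl⟩ := List.append_inj h (by rw [hU u₁ hu₁, hU u₂ hu₂])
  rfl

theorem wordSet_add_three (n : ℕ) :
    wordSet (n + 3) = cat (wordSet (n + 2)) (wordSet (n + 1)) ∪
      cat (wordSet (n + 1)) (wordSet (n + 2)) :=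
  rfl

theorem length_of_mem_wordSet : ∀ {n : ℕ} {w : List Bool}, w ∈ wordSet n → w.length = Nat.fib n
  | 1, _, rfl | 2, _, rfl => rfl
  | n + 3, _, .inl ⟨u, hu, v, hv, rfl⟩ | n + 3, _, .inr ⟨v, hv, u, hu, rfl⟩ => by
    have : Nat.fib (n + 3) = Nat.fib (n + 1) + Nat.fib (n + 2) := Nat.fib_add_two
    simp only [List.length_append, length_of_mem_wordSet hu, length_of_mem_wordSet hv]
    omega

theorem wordSet_finite : ∀ n : ℕ, (wordSet n).Finite
  | 0 => Set.finite_empty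
  | 1 | 2 => Set.finite_singleton _
  | _ + 3 => ((wordSet_finite _).image2 _ (wordSet_finite _)).union
      ((wordSet_finite _).image2 _ (wordSet_finite _))

theorem ncard_cat_wordSet (m : ℕ) (V : Set (List Bool)) :
    (cat (wordSet m) V).ncard = (wordSet m).ncard * V.ncard :=
  Set.ncard_image2_append fun _ => length_of_mem_wordSet

theorem append_mem_wordSet_of_mem_succ {n : ℕ} {u v : List Bool} (hu : u ∈ wordSet (n + 1))
    (hv : v ∈ wordSet n) : u ++ v ∈ wordSet (n + 2) := by
  cases n with
  | zero => exact absurd hv id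
  | succ => exact .inl ⟨u, hu, v, hv, rfl⟩

theorem append_mem_wordSet_of_succ_mem {n : ℕ} {u v : List Bool} (hu : u ∈ wordSet n)
    (hv : v ∈ wordSet (n + 1)) : u ++ v ∈ wordSet (n + 2) := by
  cases n with
  | zero => exact absurd hu id
  | succ => exact .inr ⟨u, hu, v, hv, rfl⟩

theorem mem_wordSet_of_append_mem_wordSet (n : ℕ) :
    (∀ {p q : List Bool}, p ++ q ∈ wordSet (n + 2) → p ∈ wordSet (n + 1) → q ∈ wordSet n) ∧
    (∀ {p q : List Bool}, p ++ q ∈ wordSet (n + 2) → p ∈ wordSet n → q ∈ wordSet (n + 1)) := by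
  induction n with
  | zero =>
    refine ⟨fun hpq hp => ?_, fun _ hp => absurd hp id⟩
    rw [hp] at hpq
    exact absurd (congrArg List.head? hpq) (by simp)
  | succ n ih =>
    have fib_le : Nat.fib (n + 1) ≤ Nat.fib (n + 2) := Nat.fib_mono (by omega)
    constructor
    · rintro p q (⟨a, ha, b, hb, hab⟩ | ⟨b, hb, a, ha, hab⟩) hp
      · obtain ⟨rfl, rfl⟩ := List.append_inj hab
          (by rw [length_of_mem_wordSet ha, length_of_mem_wordSet hp])
        exact hb
      · obtain ⟨c, rfl, rfl⟩ := List.exists_eq_append_of_append_eq_append hab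
          (by rw [length_of_mem_wordSet hb, length_of_mem_wordSet hp]; exact fib_le)
        exact ih.2 ha (ih.1 hp hb)
    · rintro p q (⟨a, ha, b, hb, hab⟩ | ⟨b, hb, a, ha, hab⟩) hp
      · obtain ⟨c, rfl, rfl⟩ := List.exists_eq_append_of_append_eq_append hab.symm
          (by rw [length_of_mem_wordSet ha, length_of_mem_wordSet hp]; exact fib_le)
        exact append_mem_wordSet_of_succ_mem (ih.1 ha hp) hb
      · obtain ⟨rfl, rfl⟩ := List.append_inj hab
          (by rw [length_of_mem_wordSet hb, length_of_mem_wordSet hp])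
        exact ha

theorem cat_wordSet_inter_cat_wordSet (n : ℕ) :
    cat (wordSet (n + 2)) (wordSet (n + 1)) ∩ cat (wordSet (n + 1)) (wordSet (n + 2)) =
      cat (wordSet (n + 1)) (cat (wordSet n) (wordSet (n + 1))) := by
  apply Set.Subset.antisymm
  · rintro _ ⟨⟨u, hu, v, hv, rfl⟩, ⟨v', hv', u', hu', h⟩⟩
    obtain ⟨r, rfl, rfl⟩ := List.exists_eq_append_of_append_eq_append h
      (by rw [length_of_mem_wordSet hv', length_of_mem_wordSet hu]; exact Nat.fib_mono (by omega))
    have hr : r ∈ wordSet n := (mem_wordSet_of_append_mem_wordSet n).1 hu hv'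
    exact ⟨v', hv', r ++ v, ⟨r, hr, v, hv, rfl⟩, (List.append_assoc _ _ _).symm⟩
  · rintro _ ⟨x, hx, _, ⟨y, hy, z, hz, rfl⟩, rfl⟩
    exact ⟨⟨x ++ y, append_mem_wordSet_of_mem_succ hx hy, z, hz, List.append_assoc _ _ _⟩,
      ⟨x, hx, y ++ z, append_mem_wordSet_of_succ_mem hy hz, rfl⟩⟩

theorem ncard_wordSet_inclusion_exclusion (n : ℕ) :
    (wordSet (n + 3)).ncard +
        (wordSet (n + 1)).ncard * (wordSet n).ncard * (wordSet (n + 1)).ncard =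
      2 * (wordSet (n + 2)).ncard * (wordSet (n + 1)).ncard := by
  have h := Set.ncard_union_add_ncard_inter
    (cat (wordSet (n + 2)) (wordSet (n + 1))) (cat (wordSet (n + 1)) (wordSet (n + 2)))
    ((wordSet_finite _).image2 _ (wordSet_finite _))
    ((wordSet_finite _).image2 _ (wordSet_finite _))
  rw [← wordSet_add_three, cat_wordSet_inter_cat_wordSet] at h
  simp only [ncard_cat_wordSet] at h
  linarith

theorem ncard_wordSet_recurrence (n : ℕ) :
    (n + 1) * (wordSet (n + 3)).ncard =
      (n + 2) * (wordSet (n + 2)).ncard * (wordSet (n + 1)).ncard := by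
  induction n with
  | zero => simp [wordSet]
  | succ n ih =>
    have h := ncard_wordSet_inclusion_exclusion (n + 1)
    linear_combination (n + 2) * h + (wordSet (n + 2)).ncard * ih

theorem stmt4_general (n : ℕ) :
    (n - 2) * (wordSet n).ncard =
      (n - 1) * (wordSet (n - 1)).ncard * (wordSet (n - 2)).ncard := by
  match n with
  | 0 | 1 | 2 => simp [wordSet]
  | n + 3 => exact ncard_wordSet_recurrence n

theorem stmt4 (n : ℕ) (hn : 3 ≤ n) :
    (n - 2) * (wordSet n).ncard =
      (n - 1) * (wordSet (n - 1)).ncard * (wordSet (n - 2)).ncard :=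
  stmt4_general n
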